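/- arXiv:2108.02345 — 2 statements merged into one kernel-verified Lean document; each statement's English description precedes it below -/
import Mathlib

section
/- Let $u : \mathbb{R} \to \mathbb{R}$ be a differentiable function that is bounded below, and suppose there is $c_0 > 0$ such that for every $t$, if $u(t) < 0$ then $u'(t) \ge -c_0 u(t)$. Then $u(t) \ge 0$ for all $t \in \mathbb{R}$. -/
theorem stmt_1 (u : ℝ → ℝ) (c₀ : ℝ)
    (hu : Differentiable ℝ u)
    (hbd : BddBelow (Set.range u))
    (hc₀ : 0 < c₀)
    (hode : ∀ t, u t < 0 → deriv u t ≥ -c₀ * u t) :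
    ∀ t, 0 ≤ u t := by
  set v : ℝ → ℝ := fun t => u t * Real.exp (c₀ * t) with hv
  have hvderiv : ∀ t : ℝ, HasDerivAt v
      (deriv u t * Real.exp (c₀ * t) + u t * (c₀ * Real.exp (c₀ * t))) t := by
    intro t
    have h1 : HasDerivAt (fun t : ℝ => Real.exp (c₀ * t)) (c₀ * Real.exp (c₀ * t)) t := by
      have := ((hasDerivAt_id t).const_mul c₀).exp
      simpa [mul_comm] using this
    exact ((hu t).hasDerivAt.mul h1)
  have hvd : Differentiable ℝ v := fun t => (hvderiv t).differentiableAt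
  -- key comparison lemma
  have key : ∀ a b : ℝ, a ≤ b → (∀ s ∈ Set.Ioo a b, u s < 0) → v a ≤ v b := by
    intro a b hab hneg
    have hmono : MonotoneOn v (Set.Icc a b) := by
      apply monotoneOn_of_deriv_nonneg (convex_Icc a b) hvd.continuous.continuousOn
        (fun x _ => (hvd x).differentiableWithinAt)
      intro x hx
      rw [interior_Icc] at hx
      have hux : u x < 0 := hneg x hx
      have := hode x hux
      rw [(hvderiv x).deriv]
      have hexp : (0:ℝ) < Real.exp (c₀ * x) := Real.exp_pos _
      nlinarith [this, hexp]
    exact hmono (Set.left_mem_Icc.2 hab) (Set.right_mem_Icc.2 hab) hab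
  -- main argument
  by_contra hcon
  push_neg at hcon
  obtain ⟨t₀, ht₀⟩ := hcon
  have ht₀' : u t₀ < 0 := ht₀
  -- u < 0 on Iic t₀
  have hneg : ∀ s ≤ t₀, u s < 0 := by
    intro s hs
    by_contra hge
    push_neg at hge
    have hslt : s < t₀ := lt_of_le_of_ne hs (by rintro rfl; linarith)
    set Z := Set.Icc s t₀ ∩ u ⁻¹' {0} with hZdef
    have hZne : Z.Nonempty := by
      have h0 : (0:ℝ) ∈ Set.Icc (u t₀) (u s) := ⟨ht₀'.le, hge⟩
      obtain ⟨x, hx, hux⟩ := intermediate_value_Icc' hs hu.continuous.continuousOn h0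
      exact ⟨x, hx, hux⟩
    have hZclosed : IsClosed Z := isClosed_Icc.inter (isClosed_singleton.preimage hu.continuous)
    have hZcomp : IsCompact Z := isCompact_Icc.of_isClosed_subset hZclosed Set.inter_subset_left
    have hmem : sSup Z ∈ Z := hZcomp.sSup_mem hZne
    set s' := sSup Z with hs'def
    obtain ⟨⟨hs's, hs't₀⟩, hus'⟩ := hmem
    have hus'0 : u s' = 0 := hus'
    have hs'lt : s' < t₀ := hs't₀.lt_of_ne (by intro h; rw [h] at hus'0; linarith)
    have hIoo : ∀ x ∈ Set.Ioo s' t₀, u x < 0 := by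
      intro x hx
      by_contra hxge
      push_neg at hxge
      have h0 : (0:ℝ) ∈ Set.Icc (u t₀) (u x) := ⟨ht₀'.le, hxge⟩
      obtain ⟨y, hy, huy⟩ := intermediate_value_Icc' hx.2.le hu.continuous.continuousOn h0
      have hyZ : y ∈ Z := ⟨⟨le_trans hs's (le_trans hx.1.le hy.1), hy.2⟩, huy⟩
      have : y ≤ s' := le_csSup hZcomp.bddAbove hyZ
      linarith [hx.1, hy.1]
    have hcmp := key s' t₀ hs'lt.le hIoo
    have hv0 : v s' = 0 := by simp [hv, hus'0]
    have hvt₀ : v t₀ < 0 := mul_neg_of_neg_of_pos ht₀' (Real.exp_pos _)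
    rw [hv0] at hcmp
    linarith
  -- unboundedness
  obtain ⟨m, hm⟩ := hbd
  have hm' : ∀ t, m ≤ u t := fun t => hm (Set.mem_range_self t)
  have hmneg : m ≤ u t₀ := hm' t₀
  -- choose R with exp (c₀ * R) > m / u t₀
  obtain ⟨R, hR0, hRbig⟩ : ∃ R : ℝ, 0 ≤ R ∧ m / u t₀ < Real.exp (c₀ * R) := by
    refine ⟨max 0 ((Real.log (m / u t₀) + 1) / c₀), le_max_left _ _, ?_⟩
    have h1 : Real.log (m / u t₀) + 1 ≤ c₀ * max 0 ((Real.log (m / u t₀) + 1) / c₀) := by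
      rw [mul_comm]
      calc Real.log (m / u t₀) + 1 = ((Real.log (m / u t₀) + 1) / c₀) * c₀ := by
            field_simp
        _ ≤ max 0 ((Real.log (m / u t₀) + 1) / c₀) * c₀ := by
            apply mul_le_mul_of_nonneg_right (le_max_right _ _) hc₀.le
    calc m / u t₀ ≤ Real.exp (Real.log (m / u t₀)) := Real.le_exp_log _
      _ < Real.exp (c₀ * max 0 ((Real.log (m / u t₀) + 1) / c₀)) := by
          apply Real.exp_lt_exp.2; linarith
  have hkey : v (t₀ - R) ≤ v t₀ := by
    apply key _ _ (by linarith)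
    intro x hx
    exact hneg x hx.2.le
  have hineq : u (t₀ - R) ≤ u t₀ * Real.exp (c₀ * R) := by
    have hexp : (0:ℝ) < Real.exp (c₀ * (t₀ - R)) := Real.exp_pos _
    have : u (t₀ - R) * Real.exp (c₀ * (t₀ - R)) ≤ u t₀ * Real.exp (c₀ * t₀) := hkey
    have hsplit : Real.exp (c₀ * t₀) = Real.exp (c₀ * R) * Real.exp (c₀ * (t₀ - R)) := by
      rw [← Real.exp_add]; ring_nf
    rw [hsplit] at this
    nlinarith [this, hexp]
  have hfinal : u t₀ * Real.exp (c₀ * R) < m := by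
    have := mul_lt_mul_of_neg_left hRbig ht₀'
    rw [mul_div_cancel₀] at this
    · linarith
    · exact ht₀'.ne
  have := hm' (t₀ - R)
  linarith
end

section
/- Let $\phi : \mathbb{R}^n \to \mathbb{R}$ be continuous, vanishing outside the unit ball $B_1(0)$, and satisfying $|\phi(y)| \le C_0 \operatorname{dist}(y, \partial B_1)^s$ for all $y \in B_1(0)$, where $0 < s < 1$. Then there is a constant $C > 0$ such that for all $x \notin \overline{B_1(0)}$, $\left| \int_{B_1(0)} \frac{\phi(y)}{|x-y|^{n+2s}}\, dy \right| \le \frac{C}{\operatorname{dist}(x, \partial B_1(0))^{s}}$. -/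
open MeasureTheory Metric Set

private lemma aux_oneD (n : ℕ) (hn : 1 ≤ n) {s d : ℝ} (hs : 0 < s) (hd : 0 < d) :
    ∫ y in Set.Ioi (0:ℝ), y ^ (n-1) •
      Set.indicator (Set.Ici d) (fun r : ℝ => r ^ (-((n:ℝ)+s))) y = d ^ (-s) / s := by
  have h1 : ∀ y ∈ Set.Ioi (0:ℝ),
      y ^ (n-1) • Set.indicator (Set.Ici d) (fun r : ℝ => r ^ (-((n:ℝ)+s))) y
        = Set.indicator (Set.Ici d) (fun r : ℝ => r ^ (-(1+s))) y := by
    intro y hy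
    simp only [Set.mem_Ioi] at hy
    by_cases h : d ≤ y
    · rw [Set.indicator_of_mem (Set.mem_Ici.2 h), Set.indicator_of_mem (Set.mem_Ici.2 h),
        smul_eq_mul, ← Real.rpow_natCast y (n-1), ← Real.rpow_add hy]
      congr 1
      have hcast : ((n - 1 : ℕ) : ℝ) = (n : ℝ) - 1 := by
        push_cast [Nat.cast_sub hn]; ring
      rw [hcast]; ring
    · rw [Set.indicator_of_notMem (by simpa using h), Set.indicator_of_notMem (by simpa using h),
        smul_zero]
  rw [setIntegral_congr_fun measurableSet_Ioi h1, setIntegral_indicator measurableSet_Ici]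
  have h2 : Set.Ioi (0:ℝ) ∩ Set.Ici d = Set.Ici d :=
    Set.inter_eq_right.2 fun y hy => lt_of_lt_of_le hd hy
  rw [h2, MeasureTheory.integral_Ici_eq_integral_Ioi,
    integral_Ioi_rpow_of_lt (by linarith) hd, show -(1+s)+1 = -s by ring, neg_div_neg_eq]

private lemma aux_int (n : ℕ) {s d : ℝ} (hs : 0 < s) (hd : 0 < d) :
    Integrable (fun z : EuclideanSpace ℝ (Fin n) =>
      Set.indicator (Set.Ici d) (fun r : ℝ => r ^ (-((n:ℝ)+s))) ‖z‖) := by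
  set p : ℝ := (n:ℝ) + s with hp
  have hppos : 0 < p := by positivity
  have hbase : Integrable (fun z : EuclideanSpace ℝ (Fin n) =>
      ((1+d)/d) ^ p * (1 + ‖z‖) ^ (-p)) :=
    (integrable_one_add_norm (by rw [finrank_euclideanSpace_fin]; linarith)).const_mul _
  refine hbase.mono' ?_ ?_
  · have heq : (fun z : EuclideanSpace ℝ (Fin n) =>
        Set.indicator (Set.Ici d) (fun r : ℝ => r ^ (-p)) ‖z‖)
        = Set.indicator {z : EuclideanSpace ℝ (Fin n) | d ≤ ‖z‖}
            (fun z => ‖z‖ ^ (-p)) := by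
      ext z
      by_cases h : d ≤ ‖z‖
      · rw [Set.indicator_of_mem (Set.mem_Ici.2 h),
          Set.indicator_of_mem
            (show z ∈ {z : EuclideanSpace ℝ (Fin n) | d ≤ ‖z‖} from h)]
      · rw [Set.indicator_of_notMem (by simpa using h),
          Set.indicator_of_notMem
            (show z ∉ {z : EuclideanSpace ℝ (Fin n) | d ≤ ‖z‖} from h)]
    have hms : MeasurableSet {z : EuclideanSpace ℝ (Fin n) | d ≤ ‖z‖} :=
      measurableSet_le measurable_const measurable_norm
    rw [heq, aestronglyMeasurable_indicator_iff hms]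
    exact ContinuousOn.aestronglyMeasurable
      ((continuous_norm.continuousOn).rpow_const fun z hz =>
        Or.inl (by have h2 : d ≤ ‖z‖ := hz; exact (lt_of_lt_of_le hd h2).ne')) hms
  · refine Filter.Eventually.of_forall fun z => ?_
    rw [Real.norm_eq_abs]
    by_cases h : d ≤ ‖z‖
    · rw [Set.indicator_of_mem (Set.mem_Ici.2 h),
        abs_of_nonneg (Real.rpow_nonneg (norm_nonneg _) _)]
      have hz : 0 < ‖z‖ := lt_of_lt_of_le hd h
      have h1 : (1 + ‖z‖) ≤ ((1+d)/d) * ‖z‖ := by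
        rw [div_mul_eq_mul_div, le_div_iff₀ hd]
        nlinarith
      have h2 : (1 + ‖z‖) ^ p ≤ ((1+d)/d) ^ p * ‖z‖ ^ p := by
        rw [← Real.mul_rpow (by positivity) hz.le]
        exact Real.rpow_le_rpow (by positivity) h1 hppos.le
      have hB : 0 < ‖z‖ ^ p := Real.rpow_pos_of_pos hz p
      have hA : 0 < (1+‖z‖) ^ p := Real.rpow_pos_of_pos (by positivity) p
      rw [Real.rpow_neg (norm_nonneg _), Real.rpow_neg (by positivity : (0:ℝ) ≤ 1 + ‖z‖),
        inv_eq_one_div, inv_eq_one_div, mul_one_div, div_le_div_iff₀ hB hA]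
      nlinarith
    · rw [Set.indicator_of_notMem (by simpa using h), abs_zero]
      positivity

private lemma aux_sphere (n : ℕ) (hn : 1 ≤ n) (x : EuclideanSpace ℝ (Fin n)) :
    Metric.infDist x (Metric.sphere (0 : EuclideanSpace ℝ (Fin n)) 1) ≤ |‖x‖ - 1| := by
  by_cases hx : x = 0
  · subst hx
    have hmem : (EuclideanSpace.single (⟨0, hn⟩ : Fin n) (1:ℝ))
        ∈ Metric.sphere (0 : EuclideanSpace ℝ (Fin n)) 1 := by
      simp [mem_sphere_zero_iff_norm, EuclideanSpace.norm_single]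
    refine (Metric.infDist_le_dist_of_mem hmem).trans ?_
    rw [dist_zero_left, EuclideanSpace.norm_single]
    simp
  · have hxn : 0 < ‖x‖ := norm_pos_iff.2 hx
    have hz : (‖x‖⁻¹ • x) ∈ Metric.sphere (0 : EuclideanSpace ℝ (Fin n)) 1 := by
      rw [mem_sphere_zero_iff_norm, norm_smul, norm_inv, norm_norm, inv_mul_cancel₀ hxn.ne']
    refine (Metric.infDist_le_dist_of_mem hz).trans_eq ?_
    rw [dist_eq_norm, show x - ‖x‖⁻¹ • x = (1 - ‖x‖⁻¹) • x by rw [sub_smul, one_smul],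
      norm_smul, Real.norm_eq_abs, ← abs_of_pos hxn, ← abs_mul]
    congr 1
    field_simp
    rw [abs_of_pos hxn]; ring

open MeasureTheory in
theorem stmt_8 (n : ℕ) (s : ℝ) (hn : 1 ≤ n) (hs : 0 < s) (hs1 : s < 1)
    (φ : EuclideanSpace ℝ (Fin n) → ℝ) (C₀ : ℝ) (hC₀ : 0 < C₀)
    (hcont : Continuous φ)
    (hvanish : ∀ y, y ∉ Metric.ball (0 : EuclideanSpace ℝ (Fin n)) 1 → φ y = 0)
    (hdecay : ∀ y ∈ Metric.ball (0 : EuclideanSpace ℝ (Fin n)) 1,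
      |φ y| ≤ C₀ * Metric.infDist y (Metric.sphere (0 : EuclideanSpace ℝ (Fin n)) 1) ^ s) :
    ∃ C > 0, ∀ x : EuclideanSpace ℝ (Fin n), x ∉ Metric.closedBall (0 : EuclideanSpace ℝ (Fin n)) 1 →
      |∫ y in Metric.ball (0 : EuclideanSpace ℝ (Fin n)) 1, φ y / ‖x - y‖ ^ ((n : ℝ) + 2 * s)| ≤
        C / Metric.infDist x (Metric.sphere (0 : EuclideanSpace ℝ (Fin n)) 1) ^ s := by
  classical
  haveI : Nontrivial (EuclideanSpace ℝ (Fin n)) :=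
    Module.nontrivial_of_finrank_pos (R := ℝ)
      (by rw [finrank_euclideanSpace_fin]; exact hn)
  set vol : ℝ := (volume (Metric.ball (0 : EuclideanSpace ℝ (Fin n)) 1)).toReal with hvol
  have hvolpos : 0 < vol := by
    rw [hvol]
    exact ENNReal.toReal_pos (measure_ball_pos volume 0 one_pos).ne' measure_ball_lt_top.ne
  have hnpos : (0:ℝ) < n := by exact_mod_cast hn
  refine ⟨C₀ * ((n:ℝ) * vol) / s,
    div_pos (mul_pos hC₀ (mul_pos hnpos hvolpos)) hs, ?_⟩
  intro x hx
  have hx1 : 1 < ‖x‖ := by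
    by_contra hcon
    exact hx (by simpa [Metric.mem_closedBall, dist_zero_right] using not_lt.1 hcon)
  set d : ℝ := ‖x‖ - 1 with hdd
  have hd : 0 < d := by rw [hdd]; linarith
  have hsphne : (Metric.sphere (0 : EuclideanSpace ℝ (Fin n)) 1).Nonempty :=
    NormedSpace.sphere_nonempty.2 zero_le_one
  have hinf_le : Metric.infDist x (Metric.sphere (0 : EuclideanSpace ℝ (Fin n)) 1) ≤ d := by
    have h := aux_sphere n hn x
    rwa [abs_of_pos (by linarith : (0:ℝ) < ‖x‖ - 1)] at h
  have hinf_ge : d ≤ Metric.infDist x (Metric.sphere (0 : EuclideanSpace ℝ (Fin n)) 1) := by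
    by_contra hcon
    push_neg at hcon
    obtain ⟨z, hz, hzlt⟩ := (Metric.infDist_lt_iff hsphne).1 hcon
    rw [mem_sphere_zero_iff_norm] at hz
    have h1 : ‖x‖ - ‖z‖ ≤ dist x z := by
      rw [dist_eq_norm]; exact norm_sub_norm_le x z
    rw [hz] at h1
    rw [hdd] at hzlt
    linarith
  have hinf : Metric.infDist x (Metric.sphere (0 : EuclideanSpace ℝ (Fin n)) 1) = d :=
    le_antisymm hinf_le hinf_ge
  set f1 : ℝ → ℝ := Set.indicator (Set.Ici d) (fun r : ℝ => r ^ (-((n:ℝ)+s))) with hf1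
  set g : EuclideanSpace ℝ (Fin n) → ℝ := fun y => C₀ * f1 ‖x - y‖ with hg
  have hf1nonneg : ∀ r, 0 ≤ f1 r := fun r => by
    rw [hf1]
    by_cases h : d ≤ r
    · rw [Set.indicator_of_mem (Set.mem_Ici.2 h)]
      exact Real.rpow_nonneg (le_of_lt (lt_of_lt_of_le hd h)) _
    · rw [Set.indicator_of_notMem (by simpa using h)]
  have hgint : Integrable g := by
    have h0 := aux_int n hs hd
    exact ((h0.comp_sub_left x)).const_mul C₀
  have key : ∀ y ∈ Metric.ball (0 : EuclideanSpace ℝ (Fin n)) 1,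
      |φ y / ‖x - y‖ ^ ((n:ℝ) + 2*s)| ≤ g y := by
    intro y hy
    have hy1 : ‖y‖ < 1 := by simpa [mem_ball_zero_iff] using hy
    have hxy : d ≤ ‖x - y‖ := by
      have h1 := norm_sub_norm_le x y
      rw [hdd]; linarith
    have hxypos : 0 < ‖x - y‖ := lt_of_lt_of_le hd hxy
    have hphi : |φ y| ≤ C₀ * ‖x - y‖ ^ s := by
      refine (hdecay y hy).trans (mul_le_mul_of_nonneg_left ?_ hC₀.le)
      refine Real.rpow_le_rpow Metric.infDist_nonneg ?_ hs.le
      have h2 := aux_sphere n hn y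
      rw [abs_of_neg (by linarith : ‖y‖ - 1 < 0)] at h2
      have h3 := norm_sub_norm_le x y
      linarith
    rw [hg]
    simp only [hf1, Set.indicator_of_mem (Set.mem_Ici.2 hxy)]
    rw [abs_div, abs_of_pos (Real.rpow_pos_of_pos hxypos _), div_le_iff₀
      (Real.rpow_pos_of_pos hxypos _)]
    calc |φ y| ≤ C₀ * ‖x - y‖ ^ s := hphi
      _ = C₀ * ‖x - y‖ ^ (-((n:ℝ)+s)) * ‖x - y‖ ^ ((n:ℝ) + 2*s) := by
          rw [mul_assoc, ← Real.rpow_add hxypos]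
          congr 2
          ring
  have step1 : |∫ y in Metric.ball (0 : EuclideanSpace ℝ (Fin n)) 1,
      φ y / ‖x - y‖ ^ ((n:ℝ) + 2*s)| ≤
      ∫ y in Metric.ball (0 : EuclideanSpace ℝ (Fin n)) 1, g y := by
    rw [← Real.norm_eq_abs]
    refine norm_integral_le_of_norm_le hgint.restrict ?_
    filter_upwards [ae_restrict_mem measurableSet_ball] with y hy
    rw [Real.norm_eq_abs]
    exact key y hy
  have step2 : ∫ y in Metric.ball (0 : EuclideanSpace ℝ (Fin n)) 1, g y ≤ ∫ y, g y :=
    setIntegral_le_integral hgint (Filter.Eventually.of_forall fun y =>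
      mul_nonneg hC₀.le (hf1nonneg _))
  have step3 : ∫ y, g y = C₀ * ((n : ℝ) * (vol * (d ^ (-s) / s))) := by
    rw [hg]
    rw [MeasureTheory.integral_const_mul]
    congr 1
    have htrans : ∫ y : EuclideanSpace ℝ (Fin n), f1 ‖x - y‖ =
        ∫ z : EuclideanSpace ℝ (Fin n), f1 ‖z‖ :=
      integral_sub_left_eq_self (fun z : EuclideanSpace ℝ (Fin n) => f1 ‖z‖) volume x
    rw [htrans, integral_fun_norm_addHaar volume f1, finrank_euclideanSpace_fin, hf1,
      aux_oneD n hn hs hd]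
    rw [nsmul_eq_mul, smul_eq_mul, Measure.real, ← hvol]
  have hfinal : |∫ y in Metric.ball (0 : EuclideanSpace ℝ (Fin n)) 1,
      φ y / ‖x - y‖ ^ ((n:ℝ) + 2*s)| ≤ C₀ * ((n:ℝ) * (vol * (d ^ (-s) / s))) :=
    step1.trans (step2.trans_eq step3)
  rw [hinf]
  refine hfinal.trans_eq ?_
  rw [Real.rpow_neg hd.le]
  have hds : (0:ℝ) < d ^ s := Real.rpow_pos_of_pos hd s
  field_simp
end
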